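/- Let G be a group. The set T⊗(G) of tensors in ν(G) is commutator closed: for all g, h, x, y ∈ G, the commutator [[g, h^φ], [x, y^φ]] is again a tensor, namely it equals [u, v^φ] with u = [g,h] and v = [x,y]. -/
import Mathlib


namespace TensorNu

universe u

/-- The commutator `[x,y] = x⁻¹y⁻¹xy`. -/
def comm {K : Type*} [Group K] (x y : K) : K := x⁻¹ * y⁻¹ * x * y

/-- Conjugation `x^y = y⁻¹xy`. -/
def conj {K : Type*} [Group K] (x y : K) : K := y⁻¹ * x * y

variable (G : Type u) [Group G]

/-- The defining relators of `ν(G)`, as elements of the free group on `G ⊕ G`,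
where `Sum.inl` corresponds to the canonical copy of `G` and `Sum.inr` to the
isomorphic copy `G^φ` (`g ↦ g^φ`).  They comprise the multiplication tables of
`G` and of `G^φ`, together with the relations
`[g₁,g₂^φ]^{g₃} = [g₁^{g₃},(g₂^{g₃})^φ]` and `[g₁,g₂^φ]^{g₃} = [g₁,g₂^φ]^{g₃^φ}`. -/
def nuRels : Set (FreeGroup (G ⊕ G)) :=
  {r | (∃ g h : G, r = FreeGroup.of (Sum.inl g) * FreeGroup.of (Sum.inl h) *
          (FreeGroup.of (Sum.inl (g * h)))⁻¹)
     ∨ (∃ g h : G, r = FreeGroup.of (Sum.inr g) * FreeGroup.of (Sum.inr h) *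
          (FreeGroup.of (Sum.inr (g * h)))⁻¹)
     ∨ (∃ g₁ g₂ g₃ : G, r =
          conj (comm (FreeGroup.of (Sum.inl g₁)) (FreeGroup.of (Sum.inr g₂)))
              (FreeGroup.of (Sum.inl g₃)) *
            (comm (FreeGroup.of (Sum.inl (conj g₁ g₃)))
              (FreeGroup.of (Sum.inr (conj g₂ g₃))))⁻¹)
     ∨ (∃ g₁ g₂ g₃ : G, r =
          conj (comm (FreeGroup.of (Sum.inl g₁)) (FreeGroup.of (Sum.inr g₂)))
              (FreeGroup.of (Sum.inl g₃)) *
            (conj (comm (FreeGroup.of (Sum.inl g₁)) (FreeGroup.of (Sum.inr g₂)))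
              (FreeGroup.of (Sum.inr g₃)))⁻¹)}

/-- The group `ν(G)`. -/
abbrev Nu := PresentedGroup (nuRels G)

/-- The canonical image of `g ∈ G` in `ν(G)`. -/
def ι (g : G) : Nu G := PresentedGroup.of (Sum.inl g)

/-- The canonical image `g^φ` of `g ∈ G` (via the copy `G^φ`) in `ν(G)`. -/
def ιφ (g : G) : Nu G := PresentedGroup.of (Sum.inr g)

/-- The set `T⊗(G)` of tensors `[a, b^φ]`, `a, b ∈ G`. -/
def tensorSet : Set (Nu G) := {x | ∃ a b : G, x = comm (ι G a) (ιφ G b)}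

/-- The image of `G` in `ν(G)` as a subgroup. -/
def GSub : Subgroup (Nu G) := Subgroup.closure (Set.range (ι G))

/-- The image of `G^φ` in `ν(G)` as a subgroup. -/
def GφSub : Subgroup (Nu G) := Subgroup.closure (Set.range (ιφ G))

/-- The non-abelian tensor square `[G, G^φ] ≤ ν(G)`. -/
def tensorSquare : Subgroup (Nu G) := ⁅GSub G, GφSub G⁆

/-- `[S, x]`: the subgroup generated by the commutators `[s, x]`, `s ∈ S`. -/
def commSub {K : Type*} [Group K] (S : Set K) (x : K) : Subgroup K :=
  Subgroup.closure {c | ∃ s ∈ S, c = comm s x}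

end TensorNu

namespace TensorNu

section PureGroup

variable {K : Type*} [Group K]

lemma conj_mul' (p q r : K) : conj (p * q) r = conj p r * conj q r := by
  simp only [conj]; group

lemma conj_inv' (p r : K) : conj p⁻¹ r = (conj p r)⁻¹ := by
  simp only [conj]; group

lemma conj_conj (p a b : K) : conj (conj p a) b = conj p (a * b) := by
  simp only [conj]; group

lemma conj_conj' (p q r : K) : conj (conj p q) r = conj (conj p r) (conj q r) := by
  simp only [conj]; group

lemma conj_self (a : K) : conj a a = a := by
  simp only [conj]; group

lemma comm_conj (p q r : K) : conj (comm p q) r = comm (conj p r) (conj q r) := by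
  simp only [comm, conj]; group

lemma comm_eq_inv_mul_conj (p q : K) : comm p q = p⁻¹ * conj p q := by
  simp only [comm, conj]; group

lemma comm_right_transfer {r P Q : K} (h : comm r P = comm r Q) :
    r * (P * Q⁻¹) = (P * Q⁻¹) * r := by
  calc r * (P * Q⁻¹) = P * r * comm r P * Q⁻¹ := by simp only [comm]; group
  _ = P * r * comm r Q * Q⁻¹ := by rw [h]
  _ = (P * Q⁻¹) * r := by simp only [comm]; group

lemma comm_left_transfer {P Q r : K} (h : comm P r = comm Q r) :
    (P * Q⁻¹) * r = r * (P * Q⁻¹) := by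
  calc (P * Q⁻¹) * r = P * (r * (comm Q r)⁻¹ * Q⁻¹) := by simp only [comm]; group
  _ = P * (r * (comm P r)⁻¹ * Q⁻¹) := by rw [h]
  _ = r * (P * Q⁻¹) := by simp only [comm]; group

lemma conj_eq_self_of_commute {p E : K} (h : p * E = E * p) : conj p E = p := by
  simp only [conj]
  rw [mul_assoc, h]
  group

lemma comm_cancel_left {n t x : K} (h : n * x = x * n) :
    comm (n⁻¹ * t) x = comm t x := by
  have h2 : n * x⁻¹ = x⁻¹ * n := by
    calc n * x⁻¹ = x⁻¹ * (x * n) * x⁻¹ := by group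
    _ = x⁻¹ * (n * x) * x⁻¹ := by rw [h]
    _ = x⁻¹ * n := by group
  calc comm (n⁻¹ * t) x = t⁻¹ * (n * x⁻¹) * n⁻¹ * t * x := by simp only [comm]; group
  _ = t⁻¹ * (x⁻¹ * n) * n⁻¹ * t * x := by rw [h2]
  _ = comm t x := by simp only [comm]; group

lemma map_conj {K' L : Type*} [Group K'] [Group L] (f : K' →* L) (p q : K') :
    f (conj p q) = conj (f p) (f q) := by
  simp only [conj, map_mul, map_inv]

lemma map_comm {K' L : Type*} [Group K'] [Group L] (f : K' →* L) (p q : K') :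
    f (comm p q) = comm (f p) (f q) := by
  simp only [comm, map_mul, map_inv]

end PureGroup

section NuBasic

universe v
variable {G : Type v} [Group G]

/-- The projection from the free group onto `ν(G)`. -/
def π (G : Type v) [Group G] : FreeGroup (G ⊕ G) →* Nu G :=
  QuotientGroup.mk' (Subgroup.normalClosure (nuRels G))

lemma π_rel {r : FreeGroup (G ⊕ G)} (h : r ∈ nuRels G) : π G r = 1 :=
  (QuotientGroup.eq_one_iff r).mpr (Subgroup.subset_normalClosure h)

lemma π_of_inl (g : G) : π G (FreeGroup.of (Sum.inl g)) = ι G g := rfl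

lemma π_of_inr (g : G) : π G (FreeGroup.of (Sum.inr g)) = ιφ G g := rfl

lemma ι_mul (g h : G) : ι G (g * h) = ι G g * ι G h := by
  have h1 : π G (FreeGroup.of (Sum.inl g) * FreeGroup.of (Sum.inl h) *
      (FreeGroup.of (Sum.inl (g * h)))⁻¹) = 1 := π_rel (Or.inl ⟨g, h, rfl⟩)
  simp only [map_mul, map_inv, π_of_inl] at h1
  rw [mul_inv_eq_one] at h1
  exact h1.symm

lemma ιφ_mul (g h : G) : ιφ G (g * h) = ιφ G g * ιφ G h := by
  have h1 : π G (FreeGroup.of (Sum.inr g) * FreeGroup.of (Sum.inr h) *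
      (FreeGroup.of (Sum.inr (g * h)))⁻¹) = 1 := π_rel (Or.inr (Or.inl ⟨g, h, rfl⟩))
  simp only [map_mul, map_inv, π_of_inr] at h1
  rw [mul_inv_eq_one] at h1
  exact h1.symm

lemma ι_one : ι G (1 : G) = 1 := by
  have h := ι_mul (G := G) 1 1
  rw [mul_one] at h
  exact (left_eq_mul.mp h)

lemma ιφ_one : ιφ G (1 : G) = 1 := by
  have h := ιφ_mul (G := G) 1 1
  rw [mul_one] at h
  exact (left_eq_mul.mp h)

lemma ι_inv (g : G) : ι G (g⁻¹) = (ι G g)⁻¹ := by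
  have h : ι G (g⁻¹) * ι G g = 1 := by rw [← ι_mul, inv_mul_cancel, ι_one]
  exact eq_inv_of_mul_eq_one_left h

lemma ιφ_inv (g : G) : ιφ G (g⁻¹) = (ιφ G g)⁻¹ := by
  have h : ιφ G (g⁻¹) * ιφ G g = 1 := by rw [← ιφ_mul, inv_mul_cancel, ιφ_one]
  exact eq_inv_of_mul_eq_one_left h

lemma ι_conj (a d : G) : conj (ι G a) (ι G d) = ι G (conj a d) := by
  simp only [conj, ι_mul, ι_inv]

lemma ιφ_conj (a d : G) : conj (ιφ G a) (ιφ G d) = ιφ G (conj a d) := by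
  simp only [conj, ιφ_mul, ιφ_inv]

/-- Relation R3: `[g₁,g₂^φ]^{g₃} = [g₁^{g₃},(g₂^{g₃})^φ]`. -/
lemma C1 (a b c : G) :
    conj (comm (ι G a) (ιφ G b)) (ι G c) = comm (ι G (conj a c)) (ιφ G (conj b c)) := by
  have h1 : π G (conj (comm (FreeGroup.of (Sum.inl a)) (FreeGroup.of (Sum.inr b)))
      (FreeGroup.of (Sum.inl c)) *
      (comm (FreeGroup.of (Sum.inl (conj a c))) (FreeGroup.of (Sum.inr (conj b c))))⁻¹) = 1 :=
    π_rel (Or.inr (Or.inr (Or.inl ⟨a, b, c, rfl⟩)))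
  simp only [map_mul, map_inv, map_conj, map_comm, π_of_inl, π_of_inr] at h1
  rw [mul_inv_eq_one] at h1
  exact h1

/-- Relation R4 combined with R3: `[g₁,g₂^φ]^{g₃^φ} = [g₁^{g₃},(g₂^{g₃})^φ]`. -/
lemma C1φ (a b c : G) :
    conj (comm (ι G a) (ιφ G b)) (ιφ G c) = comm (ι G (conj a c)) (ιφ G (conj b c)) := by
  have h1 : π G (conj (comm (FreeGroup.of (Sum.inl a)) (FreeGroup.of (Sum.inr b)))
      (FreeGroup.of (Sum.inl c)) *
      (conj (comm (FreeGroup.of (Sum.inl a)) (FreeGroup.of (Sum.inr b)))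
      (FreeGroup.of (Sum.inr c)))⁻¹) = 1 :=
    π_rel (Or.inr (Or.inr (Or.inr ⟨a, b, c, rfl⟩)))
  simp only [map_mul, map_inv, map_conj, map_comm, π_of_inl, π_of_inr] at h1
  rw [mul_inv_eq_one] at h1
  rw [← h1]
  exact C1 a b c

/-- The correction element `e(x,d) = (x^φ)^{d}·((x^d)^φ)⁻¹` commutes with `ι(G)`. -/
lemma e_commute (x d a : G) :
    ι G a * (conj (ιφ G x) (ι G d) * (ιφ G (conj x d))⁻¹)
      = (conj (ιφ G x) (ι G d) * (ιφ G (conj x d))⁻¹) * ι G a := by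
  have h := C1 (conj a (d⁻¹)) x d
  rw [comm_conj, ι_conj] at h
  have ha : conj (conj a (d⁻¹)) d = a := by simp only [conj]; group
  rw [ha] at h
  exact comm_right_transfer h

/-- The correction element `n(a,c) = a^{c^φ}·(ι(a^c))⁻¹` commutes with `ιφ(G)`. -/
lemma n_commute (a c b : G) :
    (conj (ι G a) (ιφ G c) * (ι G (conj a c))⁻¹) * ιφ G b
      = ιφ G b * (conj (ι G a) (ιφ G c) * (ι G (conj a c))⁻¹) := by
  have h := C1φ a (conj b (c⁻¹)) c
  rw [comm_conj, ιφ_conj] at h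
  have hb : conj (conj b (c⁻¹)) c = b := by simp only [conj]; group
  rw [hb] at h
  exact comm_left_transfer h

/-- Conjugating a mixed conjugate by `ι d` acts by slots. -/
lemma conj_mixed (a c d : G) :
    conj (conj (ι G a) (ιφ G c)) (ι G d) = conj (ι G (conj a d)) (ιφ G (conj c d)) := by
  rw [conj_conj', ι_conj]
  have hsplit : conj (ιφ G c) (ι G d)
      = (conj (ιφ G c) (ι G d) * (ιφ G (conj c d))⁻¹) * ιφ G (conj c d) := by group
  rw [hsplit, ← conj_conj, conj_eq_self_of_commute (e_commute c d (conj a d))]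

/-- `n(a,c)` conjugated by `ι d` is `n(a^d, c^d)`. -/
lemma n_conj (a c d : G) :
    conj (conj (ι G a) (ιφ G c) * (ι G (conj a c))⁻¹) (ι G d)
      = conj (ι G (conj a d)) (ιφ G (conj c d)) * (ι G (conj (conj a d) (conj c d)))⁻¹ := by
  rw [conj_mul', conj_inv', ι_conj, conj_mixed]
  have hg : conj (conj a c) d = conj (conj a d) (conj c d) := conj_conj' a c d
  rw [hg]

/-- The key lemma: `[[g,h], x^φ] = [[g,h^φ], x^φ]` in `ν(G)`. -/
lemma key (g h x : G) :
    comm (ι G (comm g h)) (ιφ G x) = comm (comm (ι G g) (ιφ G h)) (ιφ G x) := by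
  have hsw : conj (conj (ι G g) (ιφ G h) * (ι G (conj g h))⁻¹) (ι G g)
      = conj (ι G g) (ιφ G (conj h g)) * (ι G (conj g (conj h g)))⁻¹ := by
    rw [n_conj, conj_self]
  have hGOLD : ι G (comm g h)
      = (conj (ι G g) (ιφ G (conj h g)) * (ι G (conj g (conj h g)))⁻¹)⁻¹ *
        comm (ι G g) (ιφ G h) := by
    rw [← hsw]
    rw [show comm g h = g⁻¹ * conj g h from by simp only [comm, conj]; group]
    rw [ι_mul, ι_inv]
    simp only [comm, conj]
    group
  rw [hGOLD]
  exact comm_cancel_left (n_commute g (conj h g) x)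

end NuBasic

end TensorNu

namespace TensorNu

/-- The set of tensors is commutator closed: `[[g, h^φ], [x, y^φ]] = [u, v^φ]` with
`u = [g,h]` and `v = [x,y]`; in particular it is again a tensor. -/
theorem tensorSet_commutator_closed (G : Type u) [Group G] (g h x y : G) :
    comm (comm (ι G g) (ιφ G h)) (comm (ι G x) (ιφ G y)) =
      comm (ι G (comm g h)) (ιφ G (comm x y)) ∧
    comm (comm (ι G g) (ιφ G h)) (comm (ι G x) (ιφ G y)) ∈ tensorSet G := by
  have hconj : conj (comm (ι G g) (ιφ G h)) (comm (ι G x) (ιφ G y))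
      = conj (comm (ι G g) (ιφ G h)) (ιφ G (comm x y)) := by
    have e1 : comm (ι G x) (ιφ G y) = ((ι G (x⁻¹) * ιφ G (y⁻¹)) * ι G x) * ιφ G y := by
      rw [ι_inv, ιφ_inv]
      simp only [comm]
    rw [e1, ← conj_conj, ← conj_conj, ← conj_conj, C1, C1φ, C1, C1φ, C1φ]
    have hg' : conj (conj (conj (conj g (x⁻¹)) (y⁻¹)) x) y = conj g (comm x y) := by
      simp only [comm, conj]; group
    have hh' : conj (conj (conj (conj h (x⁻¹)) (y⁻¹)) x) y = conj h (comm x y) := by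
      simp only [comm, conj]; group
    rw [hg', hh']
  have hmain : comm (comm (ι G g) (ιφ G h)) (comm (ι G x) (ιφ G y))
      = comm (ι G (comm g h)) (ιφ G (comm x y)) := by
    rw [comm_eq_inv_mul_conj, hconj, ← comm_eq_inv_mul_conj]
    exact (key g h (comm x y)).symm
  exact ⟨hmain, comm g h, comm x y, hmain⟩

end TensorNu
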